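/- The group presented by ⟨x, y | x⁻¹ y² x = y³, x² = y⁻¹ x y⁻¹⟩ is the trivial group. -/

import Mathlib

/-!
In any group, `a⁻¹ b² a = b³` and `a² = b⁻¹ a b⁻¹` force `a` to commute with `b²`: the second
relation gives `a⁻¹ b = b⁻¹ a⁻²`, feeding this into the first gives `b⁴ = a⁻² b a`, and then
`a⁻¹ b² a = a (a⁻² b a)(a⁻¹ b) a = a b³ a⁻¹ = b²`. The first relation now reads `b² = b³`, so `b = 1`,
and the second becomes `a² = a`, so `a = 1`. Both generators being trivial, so is the presented
group.
-/

/-- The generator `x` of the free group on two generators. -/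
def x : FreeGroup Bool := FreeGroup.of true

/-- The generator `y` of the free group on two generators. -/
def y : FreeGroup Bool := FreeGroup.of false

section Relations

variable {G : Type*} [Group G] {a b : G}

theorem inv_mul_eq_of_sq_eq (h : a ^ 2 = b⁻¹ * a * b⁻¹) : a⁻¹ * b = b⁻¹ * a⁻¹ ^ 2 :=
  calc a⁻¹ * b = b⁻¹ * (b⁻¹ * a * b⁻¹)⁻¹ := by group
    _ = b⁻¹ * a⁻¹ ^ 2 := by rw [← h]; group

theorem pow_four_eq_of_relations (h₁ : a⁻¹ * b ^ 2 * a = b ^ 3) (h₂ : a ^ 2 = b⁻¹ * a * b⁻¹) :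
    b ^ 4 = a⁻¹ ^ 2 * b * a :=
  calc b ^ 4 = b * (a⁻¹ * b ^ 2 * a) := by rw [h₁]; group
    _ = b * (a⁻¹ * b) * b * a := by simp only [sq, mul_assoc]
    _ = a⁻¹ ^ 2 * b * a := by rw [inv_mul_eq_of_sq_eq h₂]; group

theorem inv_mul_sq_mul_eq_sq_of_relations (h₁ : a⁻¹ * b ^ 2 * a = b ^ 3)
    (h₂ : a ^ 2 = b⁻¹ * a * b⁻¹) : a⁻¹ * b ^ 2 * a = b ^ 2 :=
  calc a⁻¹ * b ^ 2 * a = a * (a⁻¹ ^ 2 * b * a) * (a⁻¹ * b) * a := by simp [sq, mul_assoc]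
    _ = a * b ^ 3 * a⁻¹ := by
      rw [← pow_four_eq_of_relations h₁ h₂, inv_mul_eq_of_sq_eq h₂]; group
    _ = b ^ 2 := by rw [← h₁]; group

theorem eq_one_of_relations (h₁ : a⁻¹ * b ^ 2 * a = b ^ 3) (h₂ : a ^ 2 = b⁻¹ * a * b⁻¹) :
    a = 1 ∧ b = 1 := by
  have hb : b = 1 := mul_eq_left.mp <| by
    rw [← pow_succ, ← h₁, inv_mul_sq_mul_eq_sq_of_relations h₁ h₂]
  have ha : a * a = a := by simpa [hb, sq] using h₂
  exact ⟨mul_eq_left.mp ha, hb⟩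

end Relations

theorem PresentedGroup.subsingleton_of_forall_of_eq_one {α : Type*} {rels : Set (FreeGroup α)}
    (h : ∀ i, (of i : PresentedGroup rels) = 1) : Subsingleton (PresentedGroup rels) :=
  have hid : MonoidHom.id (PresentedGroup rels) = 1 := ext h
  subsingleton_of_forall_eq 1 fun g => DFunLike.congr_fun hid g

/-- The group ⟨x, y | x⁻¹ y² x = y³, x² = y⁻¹ x y⁻¹⟩ is trivial. -/
theorem presentedGroup_trivial_7 :
    Subsingleton (PresentedGroup ({x⁻¹ * y ^ 2 * x * (y ^ 3)⁻¹, x ^ 2 * (y⁻¹ * x * y⁻¹)⁻¹} :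
      Set (FreeGroup Bool))) := by
  set rels : Set (FreeGroup Bool) := {x⁻¹ * y ^ 2 * x * (y ^ 3)⁻¹, x ^ 2 * (y⁻¹ * x * y⁻¹)⁻¹}
  have h₁ : PresentedGroup.mk rels (x⁻¹ * y ^ 2 * x) = PresentedGroup.mk rels (y ^ 3) :=
    PresentedGroup.mk_eq_mk_of_mul_inv_mem (Set.mem_insert _ _)
  have h₂ : PresentedGroup.mk rels (x ^ 2) = PresentedGroup.mk rels (y⁻¹ * x * y⁻¹) :=
    PresentedGroup.mk_eq_mk_of_mul_inv_mem (Set.mem_insert_of_mem _ rfl)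
  simp only [map_mul, map_inv, map_pow] at h₁ h₂
  obtain ⟨hx, hy⟩ := eq_one_of_relations h₁ h₂
  refine PresentedGroup.subsingleton_of_forall_of_eq_one fun i => ?_
  cases i
  exacts [hy, hx]
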